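/- Let E be a counterclockwise-oriented d-minimal segment not lying on a line through the origin. Then W(E) ≡ dis(E) (mod d), where dis(E) is the number of lattice lines of L_d parallel to E strictly between the origin's parallel line and the line containing E, plus one (equivalently, the lattice-distance of the line containing E from the origin). -/

import Mathlib

noncomputable section

/-- The lattice `(1/d)ℤ × (1/d)ℤ` inside `ℝ × ℝ`. -/
def Ld (d : ℕ) : Set (ℝ × ℝ) :=
  {p | ∃ a b : ℤ, p = ((a : ℝ) / d, (b : ℝ) / d)}

/-- A `d`-minimal triangle: vertices in `L_d`, not collinear, and the closed triangle
meets `L_d` exactly in its three vertices. -/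
def IsMinimalTriangle (d : ℕ) (p q r : ℝ × ℝ) : Prop :=
  p ∈ Ld d ∧ q ∈ Ld d ∧ r ∈ Ld d ∧
    ¬ Collinear ℝ ({p, q, r} : Set (ℝ × ℝ)) ∧
    convexHull ℝ ({p, q, r} : Set (ℝ × ℝ)) ∩ Ld d = {p, q, r}

/-- An element of `G = GL₂(ℤ) ⋉ ℤ²`: an integer matrix `[[a,b],[c,e]]` of determinant
`±1` together with an integer translation vector `(v1, v2)`. -/
structure GMap where
  a : ℤ
  b : ℤ
  c : ℤ
  e : ℤ
  v1 : ℤ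
  v2 : ℤ
  unimod : a * e - b * c = 1 ∨ a * e - b * c = -1

/-- The affine action `x ↦ Ux + v` of a `GMap` on `ℝ²`. -/
def GMap.app (g : GMap) (p : ℝ × ℝ) : ℝ × ℝ :=
  ((g.a : ℝ) * p.1 + (g.b : ℝ) * p.2 + (g.v1 : ℝ),
   (g.c : ℝ) * p.1 + (g.e : ℝ) * p.2 + (g.v2 : ℝ))

/-- A `d`-minimal segment: endpoints in `L_d`, distinct, and the closed segment meets
`L_d` exactly in its two endpoints. -/
def IsMinimalSegment (d : ℕ) (p q : ℝ × ℝ) : Prop :=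
  p ∈ Ld d ∧ q ∈ Ld d ∧ p ≠ q ∧ segment ℝ p q ∩ Ld d = {p, q}

/-- The point of `L_d` with integer numerator data `p : ℤ × ℤ`. -/
def pt (d : ℕ) (p : ℤ × ℤ) : ℝ × ℝ := ((p.1 : ℝ) / d, (p.2 : ℝ) / d)

/-- Counterclockwise orientation of the ordered triple of numerator data. -/
def ccwZ (p q r : ℤ × ℤ) : Prop :=
  0 < (q.1 - p.1) * (r.2 - p.2) - (q.2 - p.2) * (r.1 - p.1)

/-- Weight (mod `d`) of the oriented minimal segment from `(w/d, x/d)` to `(y/d, z/d)`,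
given by numerator data `(w,x)` and `(y,z)`. -/
def segWeight (d : ℕ) (p q : ℤ × ℤ) : ZMod d :=
  ((p.1 * q.2 - p.2 * q.1 : ℤ) : ZMod d)

/-- The multiset of weights of the three edges `p→q`, `q→r`, `r→p` of a triangle
given by numerator data. -/
def triWeight (d : ℕ) (p q r : ℤ × ℤ) : Multiset (ZMod d) :=
  {segWeight d p q, segWeight d q r, segWeight d r p}

/-- Dot product on `ℝ × ℝ`. -/
def dot (a b : ℝ × ℝ) : ℝ := a.1 * b.1 + a.2 * b.2

/-- `L` is a line with direction `u`. -/
def IsParLine (u : ℝ × ℝ) (L : Set (ℝ × ℝ)) : Prop :=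
  ∃ a : ℝ × ℝ, L = {x | ∃ t : ℝ, x = a + t • u}

/-- The foot of the perpendicular from the origin to the line through `p` with
direction `q - p`. -/
def foot (p q : ℝ × ℝ) : ℝ × ℝ :=
  p - (dot p (q - p) / dot (q - p) (q - p)) • (q - p)

/-- The lattice-distance `dis(E)` of the segment from `p` to `q`: the number of
`L_d`-lines parallel to `E` meeting the closed perpendicular segment from the origin
to the line containing `E`, minus one. -/
def dis (d : ℕ) (p q : ℝ × ℝ) : ℕ :=
  Set.ncard {L : Set (ℝ × ℝ) | IsParLine (q - p) L ∧ (L ∩ Ld d).Nonempty ∧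
    (L ∩ segment ℝ (0 : ℝ × ℝ) (foot p q)).Nonempty} - 1

/-!
Write `u = q - p`; minimality of the segment makes `d • u` a primitive integer vector. The lines
with direction `u` are the fibres of the linear form `x ↦ det [x u]`, so `L_d`-lines correspond to
the values it takes on `L_d`, which by Bézout are exactly `ℤ / d²`. On the perpendicular segment
from the origin to the line through `p` it takes the values `[0, det [p u]]`, and
`d² det [p u] = wz - xy`; hence exactly `wz - xy + 1` lines are counted.
-/

def detWith (u : ℝ × ℝ) : ℝ × ℝ →ₗ[ℝ] ℝ :=
  u.2 • LinearMap.fst ℝ ℝ ℝ - u.1 • LinearMap.snd ℝ ℝ ℝ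

@[simp]
lemma detWith_apply (u x : ℝ × ℝ) : detWith u x = x.1 * u.2 - x.2 * u.1 := by
  simp [detWith, mul_comm]

lemma detWith_self (u : ℝ × ℝ) : detWith u u = 0 := by
  simp [mul_comm]

section detWith

variable {u : ℝ × ℝ}

lemma dot_self_pos (hu : u ≠ 0) : 0 < dot u u := by
  have : u.1 ≠ 0 ∨ u.2 ≠ 0 := by
    by_contra! h
    exact hu (Prod.ext h.1 h.2)
  unfold dot
  rcases this with h | h
  · exact add_pos_of_pos_of_nonneg (mul_self_pos.2 h) (mul_self_nonneg _)
  · exact add_pos_of_nonneg_of_pos (mul_self_nonneg _) (mul_self_pos.2 h)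

lemma exists_eq_smul_of_detWith_eq_zero (hu : u ≠ 0) {x : ℝ × ℝ} (hx : detWith u x = 0) :
    ∃ t : ℝ, x = t • u := by
  have hx : x.1 * u.2 - x.2 * u.1 = 0 := by simpa using hx
  have huu := (dot_self_pos hu).ne'
  refine ⟨dot x u / dot u u, Prod.ext ?_ ?_⟩ <;>
    simp only [Prod.smul_fst, Prod.smul_snd, smul_eq_mul] <;> field_simp <;> unfold dot
  · linear_combination u.2 * hx
  · linear_combination -u.1 * hx

lemma detWith_surjective (hu : u ≠ 0) : Function.Surjective (detWith u) := by
  intro c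
  refine ⟨(c / dot u u) • (u.2, -u.1), ?_⟩
  have huu := (dot_self_pos hu).ne'
  simp only [detWith_apply, Prod.smul_fst, Prod.smul_snd, smul_eq_mul]
  field_simp
  unfold dot
  ring

lemma setOf_add_smul_eq_preimage_detWith (hu : u ≠ 0) (a : ℝ × ℝ) :
    {x | ∃ t : ℝ, x = a + t • u} = detWith u ⁻¹' {detWith u a} := by
  ext x
  constructor
  · rintro ⟨t, rfl⟩
    rw [Set.mem_preimage, Set.mem_singleton_iff, map_add, map_smul, detWith_self, smul_zero,
      add_zero]
  · intro hx
    have hxa : detWith u (x - a) = 0 := by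
      rw [map_sub, sub_eq_zero]
      exact hx
    obtain ⟨t, ht⟩ := exists_eq_smul_of_detWith_eq_zero hu hxa
    exact ⟨t, by rw [← ht, add_sub_cancel]⟩

lemma isParLine_iff (hu : u ≠ 0) {L : Set (ℝ × ℝ)} :
    IsParLine u L ↔ ∃ c : ℝ, L = detWith u ⁻¹' {c} := by
  constructor
  · rintro ⟨a, rfl⟩
    exact ⟨_, setOf_add_smul_eq_preimage_detWith hu a⟩
  · rintro ⟨c, rfl⟩
    obtain ⟨a, rfl⟩ := detWith_surjective hu c
    exact ⟨a, (setOf_add_smul_eq_preimage_detWith hu a).symm⟩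

lemma ncard_setOf_isParLine_meets (hu : u ≠ 0) (A B : Set (ℝ × ℝ)) :
    {L | IsParLine u L ∧ (L ∩ A).Nonempty ∧ (L ∩ B).Nonempty}.ncard
      = (detWith u '' A ∩ detWith u '' B).ncard := by
  have hlines : {L | IsParLine u L ∧ (L ∩ A).Nonempty ∧ (L ∩ B).Nonempty}
      = (fun c => detWith u ⁻¹' {c}) '' (detWith u '' A ∩ detWith u '' B) := by
    ext L
    simp only [Set.mem_ofPred_eq, isParLine_iff hu]
    constructor
    · rintro ⟨⟨c, rfl⟩, ⟨x, hxL, hxA⟩, ⟨y, hyL, hyB⟩⟩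
      exact ⟨c, ⟨⟨x, hxA, hxL⟩, ⟨y, hyB, hyL⟩⟩, rfl⟩
    · rintro ⟨c, ⟨⟨x, hxA, rfl⟩, ⟨y, hyB, hy⟩⟩, rfl⟩
      exact ⟨⟨_, rfl⟩, ⟨x, rfl, hxA⟩, ⟨y, hy, hyB⟩⟩
  rw [hlines]
  exact Set.ncard_image_of_injective _
    ((Set.preimage_injective.2 (detWith_surjective hu)).comp Set.singleton_injective)

end detWith

lemma image_detWith_segment_zero (u v : ℝ × ℝ) :
    detWith u '' segment ℝ 0 v = segment ℝ 0 (detWith u v) := by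
  simpa using image_segment ℝ (detWith u).toAffineMap 0 v

lemma ncard_range_div_inter_segment {c : ℝ} (hc : 0 < c) {D : ℤ} (hD : 0 ≤ D) :
    (Set.range (fun k : ℤ => (k : ℝ) / c) ∩ segment ℝ 0 ((D : ℝ) / c)).ncard = D.toNat + 1 := by
  have hinj : Function.Injective (fun k : ℤ => (k : ℝ) / c) := fun k l hkl => by
    exact_mod_cast (div_left_inj' hc.ne').1 hkl
  have hpre : (fun k : ℤ => (k : ℝ) / c) ⁻¹' segment ℝ 0 ((D : ℝ) / c) = Set.Icc 0 D := by
    rw [segment_eq_Icc (by positivity)]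
    ext k
    simp [div_le_div_iff_of_pos_right hc, le_div_iff₀ hc]
  rw [← Set.image_preimage_eq_range_inter, hpre, Set.ncard_image_of_injective _ hinj,
    ← Finset.coe_Icc, Set.ncard_coe_finset, Int.card_Icc]
  omega

section Lattice

variable {d : ℕ}

lemma Ld_eq_range_pt : Ld d = Set.range (pt d) := by
  ext p
  simp [Ld, pt, eq_comm]

lemma pt_zero : pt d 0 = 0 := by
  ext <;> simp [pt]

lemma pt_add (P Q : ℤ × ℤ) : pt d (P + Q) = pt d P + pt d Q := by
  ext <;> simp [pt, add_div]

lemma pt_sub (P Q : ℤ × ℤ) : pt d (P - Q) = pt d P - pt d Q := by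
  ext <;> simp [pt, sub_div]

lemma pt_smul (k : ℤ) (P : ℤ × ℤ) : pt d (k • P) = (k : ℝ) • pt d P := by
  ext <;> simp [pt, mul_div_assoc]

lemma pt_injective (hd : d ≠ 0) : Function.Injective (pt d) := by
  intro P Q h
  have hd' : (d : ℝ) ≠ 0 := Nat.cast_ne_zero.2 hd
  simp only [pt, Prod.mk.injEq, div_left_inj' hd', Int.cast_inj] at h
  exact Prod.ext h.1 h.2

lemma detWith_pt (U P : ℤ × ℤ) :
    detWith (pt d U) (pt d P) = ((P.1 * U.2 - P.2 * U.1 : ℤ) : ℝ) / (d : ℝ) ^ 2 := by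
  simp only [detWith_apply, pt]
  push_cast
  ring

lemma image_detWith_Ld {U : ℤ × ℤ} (hU : IsCoprime U.1 U.2) :
    detWith (pt d U) '' Ld d = Set.range (fun k : ℤ => (k : ℝ) / (d : ℝ) ^ 2) := by
  rw [Ld_eq_range_pt, ← Set.range_comp]
  ext c
  constructor
  · rintro ⟨P, rfl⟩
    exact ⟨_, (detWith_pt U P).symm⟩
  · rintro ⟨k, rfl⟩
    obtain ⟨s, t, hst⟩ := hU
    refine ⟨(k * t, -(k * s)), ?_⟩
    rw [Function.comp_apply, detWith_pt]
    congr 2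
    linear_combination k * hst

lemma isCoprime_of_isMinimalSegment (hd : d ≠ 0) {P Q : ℤ × ℤ}
    (h : IsMinimalSegment d (pt d P) (pt d Q)) : IsCoprime (Q - P).1 (Q - P).2 := by
  obtain ⟨-, -, hne, hseg⟩ := h
  have hPQ : Q - P ≠ 0 := fun h0 => hne (by rw [sub_eq_zero.1 h0])
  rw [Int.isCoprime_iff_gcd_eq_one]
  set g := Int.gcd (Q - P).1 (Q - P).2
  have hg : 1 ≤ g := Nat.one_le_iff_ne_zero.2 fun h0 =>
    hPQ (Prod.ext (Int.gcd_eq_zero_iff.1 h0).1 (Int.gcd_eq_zero_iff.1 h0).2)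
  obtain ⟨V, hV⟩ : ∃ V : ℤ × ℤ, Q - P = (g : ℤ) • V :=
    ⟨((Q - P).1 / g, (Q - P).2 / g), Prod.ext
      (Int.mul_ediv_cancel' (Int.gcd_dvd_left _ _)).symm
      (Int.mul_ediv_cancel' (Int.gcd_dvd_right _ _)).symm⟩
  have hV0 : V ≠ 0 := by
    rintro rfl
    exact hPQ (by rw [hV, smul_zero])
  have hmem : pt d (P + V) ∈ segment ℝ (pt d P) (pt d Q) := by
    have hg' : (1 : ℝ) ≤ g := by exact_mod_cast hg
    have hline : AffineMap.lineMap (pt d P) (pt d Q) ((g : ℝ)⁻¹) = pt d (P + V) := by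
      rw [AffineMap.lineMap_apply, vsub_eq_sub, vadd_eq_add, ← pt_sub, hV, pt_smul, pt_add,
        Int.cast_natCast, inv_smul_smul₀ (by positivity), add_comm]
    rw [← hline]
    exact lineMap_mem_segment ℝ _ _ ⟨by positivity, inv_le_one_of_one_le₀ hg'⟩
  have hends : pt d (P + V) ∈ ({pt d P, pt d Q} : Set (ℝ × ℝ)) := by
    rw [← hseg, Ld_eq_range_pt]
    exact ⟨hmem, _, rfl⟩
  rcases hends with hP | hQ
  · exact absurd (add_eq_left.1 (pt_injective hd hP)) hV0
  · have hgV : (g : ℤ) • V = (1 : ℤ) • V := by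
      rw [one_smul, ← hV, ← pt_injective hd hQ, add_sub_cancel_left]
    exact_mod_cast smul_left_injective ℤ hV0 hgV

lemma dis_pt (hd : d ≠ 0) {P Q : ℤ × ℤ} (hPQ : IsCoprime (Q - P).1 (Q - P).2)
    (hD : 0 ≤ P.1 * Q.2 - P.2 * Q.1) :
    dis d (pt d P) (pt d Q) = (P.1 * Q.2 - P.2 * Q.1).toNat := by
  have hu : pt d Q - pt d P ≠ 0 := by
    rw [← pt_sub, ← pt_zero (d := d)]
    exact (pt_injective hd).ne fun h0 => not_isCoprime_zero_zero (h0 ▸ hPQ)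
  have hfoot : detWith (pt d Q - pt d P) (foot (pt d P) (pt d Q))
      = ((P.1 * Q.2 - P.2 * Q.1 : ℤ) : ℝ) / (d : ℝ) ^ 2 := by
    rw [foot, map_sub, map_smul, detWith_self, smul_zero, sub_zero, ← pt_sub, detWith_pt]
    congr 2
    simp only [Prod.fst_sub, Prod.snd_sub]
    ring
  unfold dis
  rw [ncard_setOf_isParLine_meets hu, image_detWith_segment_zero, hfoot, ← pt_sub,
    image_detWith_Ld hPQ, ncard_range_div_inter_segment (by positivity) hD]
  rfl

end Lattice

theorem weight_eq_lattice_distance_general (d : ℕ) (hd : 0 < d) (w x y z : ℤ)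
    (hmin : IsMinimalSegment d ((w : ℝ) / d, (x : ℝ) / d) ((y : ℝ) / d, (z : ℝ) / d))
    (hccw : 0 ≤ w * z - x * y) :
    ((w * z - x * y : ℤ) : ZMod d)
      = ((dis d ((w : ℝ) / d, (x : ℝ) / d) ((y : ℝ) / d, (z : ℝ) / d) : ℕ) : ZMod d) := by
  have hcop := isCoprime_of_isMinimalSegment (P := (w, x)) (Q := (y, z)) hd.ne' hmin
  have hdis := dis_pt hd.ne' hcop hccw
  change _ = ((dis d (pt d (w, x)) (pt d (y, z)) : ℕ) : ZMod d)
  rw [hdis, ← Int.cast_natCast, Int.toNat_of_nonneg hccw]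

/-- for a counterclockwise-oriented `d`-minimal segment not lying on a
line through the origin, the weight equals the lattice distance mod `d`. -/
theorem weight_eq_lattice_distance (d : ℕ) (hd : 0 < d) (w x y z : ℤ)
    (hmin : IsMinimalSegment d ((w : ℝ) / d, (x : ℝ) / d) ((y : ℝ) / d, (z : ℝ) / d))
    (hnotline : w * z - x * y ≠ 0)
    (hccw : 0 ≤ w * z - x * y) :
    ((w * z - x * y : ℤ) : ZMod d)
      = ((dis d ((w : ℝ) / d, (x : ℝ) / d) ((y : ℝ) / d, (z : ℝ) / d) : ℕ) : ZMod d) :=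
  weight_eq_lattice_distance_general d hd w x y z hmin hccw
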